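/- There is an absolute constant C such that the following holds. Let q = q₀ q₁ with gcd(q₀, q₁) = 1 and let X ≥ 2. Then sup_{F₁,F₂} Σ_{r ∈ (ℤ/qℤ)*} |S_{F₁,F₂}(r/q)| ≤ C q₁⁹ · sup_{F₁,F₂} Σ_{r₀ ∈ (ℤ/q₀ℤ)*} |S_{F₁,F₂}(r₀/q₀)|, where both suprema are over 1-bounded functions F₁,F₂ : [X]⁴ → ℂ. -/

import Mathlib

/- STATEMENT 7: factorization lemma for sums of |S_{F₁,F₂}(r/q)| over r ∈ (ℤ/qℤ)*. -/

open Matrix MeasureTheory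

noncomputable section

/-- The quadratic form Q(x,y) = xᵀax + xᵀby + yᵀcy over a commutative ring. -/
def Qform {R : Type*} [CommRing R] (a b c : Matrix (Fin 4) (Fin 4) R)
    (x y : Fin 4 → R) : R :=
  x ⬝ᵥ (a *ᵥ x) + x ⬝ᵥ (b *ᵥ y) + y ⬝ᵥ (c *ᵥ y)

/-- The box [X]⁴ = {1,…,⌊X⌋}⁴ inside ℤ⁴. -/
def box (X : ℝ) : Finset (Fin 4 → ℤ) := Fintype.piFinset fun _ => Finset.Icc 1 ⌊X⌋

/-- e(t) := e^{2πit}. -/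
def eReal (t : ℝ) : ℂ := Complex.exp (2 * Real.pi * Complex.I * t)

/-- S_{F₁,F₂}(θ) := Σ_{x,y ∈ [X]⁴} F₁(x)F₂(y) e(θ Q(x,y)). -/
def SFF (a b c : Matrix (Fin 4) (Fin 4) ℤ) (X : ℝ)
    (F₁ F₂ : (Fin 4 → ℤ) → ℂ) (θ : ℝ) : ℂ :=
  ∑ x ∈ box X, ∑ y ∈ box X, F₁ x * F₂ y * eReal (θ * (Int.cast (Qform a b c x y) : ℝ))


/-! Write `s q₀ + t q₁ = 1`. Then `r / (q₀ q₁) ≡ r t / q₀ + r s / q₁ (mod 1)`, and the second phase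
`e(r s Q(x, y) / q₁)` depends only on the residues of `x` and `y` modulo `q₁`. Splitting `F₁` and `F₂`
into their restrictions to the `q₁⁴` residue classes bounds `|S(r / q)|` by `q₁⁸` terms
`|S_{F₁ᵘ, F₂ᵛ}(ρ(r) / q₀)|` with `ρ(r) = r t mod q₀`. The map `ρ` sends reduced residues modulo `q`
to reduced residues modulo `q₀` and is at most `q₁`-to-one, and choosing the pair `(u, v)` with the
largest sum over `r₀` gives the factor `q₁⁸ · q₁`. -/

open Finset

lemma eReal_add (s t : ℝ) : eReal (s + t) = eReal s * eReal t := by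
  rw [eReal, eReal, eReal, ← Complex.exp_add]; push_cast; ring_nf

lemma eReal_intCast (n : ℤ) : eReal n = 1 := by
  rw [eReal, show 2 * (Real.pi : ℂ) * Complex.I * (n : ℝ) = n * (2 * Real.pi * Complex.I) by
    push_cast; ring, Complex.exp_int_mul_two_pi_mul_I]

lemma norm_eReal (t : ℝ) : ‖eReal t‖ = 1 := by
  rw [eReal, show 2 * (Real.pi : ℂ) * Complex.I * (t : ℝ) = ((2 * Real.pi * t : ℝ) : ℂ) * Complex.I by
    push_cast; ring]
  exact Complex.norm_exp_ofReal_mul_I _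

lemma eReal_div_mul_eq_of_intCast_eq {n : ℕ} {m k m' k' : ℤ}
    (h : ((m * k : ℤ) : ZMod n) = ((m' * k' : ℤ) : ZMod n)) :
    eReal (m / n * k) = eReal (m' / n * k') := by
  rcases eq_or_ne n 0 with rfl | hn
  · simp
  obtain ⟨d, hd⟩ := (ZMod.intCast_eq_intCast_iff_dvd_sub _ _ _).1 h
  have hdR : (m' : ℝ) * k' - m * k = n * d := by exact_mod_cast hd
  have : (m : ℝ) / n * k = m' / n * k' + (-d : ℤ) := by
    push_cast; field_simp; linarith
  rw [this, eReal_add, eReal_intCast, mul_one]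

lemma eReal_div_mul_eq_mul {q₀ q₁ : ℕ} [NeZero q₀] [NeZero q₁] {s t : ℤ}
    (hst : s * q₀ + t * q₁ = 1) (m k : ℤ) :
    eReal (m / (q₀ * q₁) * k) = eReal ((m * t : ℤ) / q₀ * k) * eReal ((m * s : ℤ) / q₁ * k) := by
  have hstR : (s : ℝ) * q₀ + t * q₁ = 1 := by exact_mod_cast hst
  have hq₀ : (q₀ : ℝ) ≠ 0 := Nat.cast_ne_zero.2 (NeZero.ne q₀)
  have hq₁ : (q₁ : ℝ) ≠ 0 := Nat.cast_ne_zero.2 (NeZero.ne q₁)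
  rw [← eReal_add]
  congr 1
  push_cast
  field_simp
  linear_combination (-(m : ℝ) * k) * hstR

lemma map_Qform {R S : Type*} [CommRing R] [CommRing S] (f : R →+* S)
    (a b c : Matrix (Fin 4) (Fin 4) R) (x y : Fin 4 → R) :
    f (Qform a b c x y) = Qform (a.map f) (b.map f) (c.map f) (f ∘ x) (f ∘ y) := by
  have hmulVec (M : Matrix (Fin 4) (Fin 4) R) (v : Fin 4 → R) : f ∘ (M *ᵥ v) = M.map f *ᵥ (f ∘ v) :=
    funext (RingHom.map_mulVec f M v)
  simp only [Qform, map_add, RingHom.map_dotProduct, hmulVec]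

lemma sum_indicator_preimage_singleton_mul {α ι : Type*} [Fintype ι]
    (f : α → ι) (F : α → ℂ) (φ : ι → ℂ) (x : α) :
    ∑ i, (f ⁻¹' {i}).indicator F x * φ i = F x * φ (f x) := by
  classical
  simp only [Set.indicator_apply, Set.mem_preimage, Set.mem_singleton_iff, ite_mul, zero_mul]
  exact Fintype.sum_ite_eq _ _

lemma norm_sum_sum_mul_phase_le {α β ι κ : Type*} [Fintype ι] [Fintype κ]
    (s : Finset α) (t : Finset β) (f : α → ι) (g : β → κ) (F₁ : α → ℂ) (F₂ : β → ℂ)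
    (φ : ι → κ → ℂ) (hφ : ∀ i j, ‖φ i j‖ ≤ 1) (K : α → β → ℂ) :
    ‖∑ x ∈ s, ∑ y ∈ t, F₁ x * F₂ y * (φ (f x) (g y) * K x y)‖ ≤
      ∑ i, ∑ j, ‖∑ x ∈ s, ∑ y ∈ t,
        (f ⁻¹' {i}).indicator F₁ x * (g ⁻¹' {j}).indicator F₂ y * K x y‖ := by
  have hpoint (x : α) (y : β) : F₁ x * F₂ y * (φ (f x) (g y) * K x y) =
      ∑ i, ∑ j, φ i j * ((f ⁻¹' {i}).indicator F₁ x * (g ⁻¹' {j}).indicator F₂ y * K x y) := by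
    calc F₁ x * F₂ y * (φ (f x) (g y) * K x y)
        = ∑ i, (f ⁻¹' {i}).indicator F₁ x * (F₂ y * (φ i (g y) * K x y)) := by
          rw [sum_indicator_preimage_singleton_mul]; ring
      _ = ∑ i, (f ⁻¹' {i}).indicator F₁ x * ∑ j, (g ⁻¹' {j}).indicator F₂ y * (φ i j * K x y) := by
          simp only [sum_indicator_preimage_singleton_mul]
      _ = _ := by simp only [mul_sum]; congr! 2; ring
  have hsplit : ∑ x ∈ s, ∑ y ∈ t, F₁ x * F₂ y * (φ (f x) (g y) * K x y) =
      ∑ i, ∑ j, φ i j * ∑ x ∈ s, ∑ y ∈ t,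
        (f ⁻¹' {i}).indicator F₁ x * (g ⁻¹' {j}).indicator F₂ y * K x y := by
    simp only [hpoint, mul_sum]
    rw [sum_congr rfl fun x _ => sum_comm.trans (sum_congr rfl fun i _ => sum_comm), sum_comm]
    exact sum_congr rfl fun i _ => sum_comm
  rw [hsplit]
  refine (norm_sum_le _ _).trans (sum_le_sum fun i _ => (norm_sum_le _ _).trans
    (sum_le_sum fun j _ => ?_))
  rw [norm_mul]
  exact mul_le_of_le_one_left (norm_nonneg _) (hφ i j)

def reduceMod (n : ℕ) (x : Fin 4 → ℤ) : Fin 4 → ZMod n := Int.castRingHom (ZMod n) ∘ x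

lemma norm_SFF_le_sum_residueClasses (a b c : Matrix (Fin 4) (Fin 4) ℤ) (X : ℝ)
    (F₁ F₂ : (Fin 4 → ℤ) → ℂ) {q₀ q₁ : ℕ} [NeZero q₀] [NeZero q₁] {s t : ℤ}
    (hst : s * q₀ + t * q₁ = 1) (r : ℕ) :
    ‖SFF a b c X F₁ F₂ (r / (q₀ * q₁))‖ ≤ ∑ u, ∑ v,
      ‖SFF a b c X ((reduceMod q₁ ⁻¹' {u}).indicator F₁) ((reduceMod q₁ ⁻¹' {v}).indicator F₂)
        (((r : ZMod q₀) * t).val / q₀)‖ := by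
  let Q₁ := Qform (a.map (Int.castRingHom (ZMod q₁))) (b.map (Int.castRingHom (ZMod q₁)))
    (c.map (Int.castRingHom (ZMod q₁)))
  let φ u v := eReal ((r * s : ℤ) / q₁ * ((Q₁ u v).val : ℤ))
  have hphase (x y : Fin 4 → ℤ) : eReal (r / (q₀ * q₁) * Qform a b c x y) =
      φ (reduceMod q₁ x) (reduceMod q₁ y) *
        eReal ((((r : ZMod q₀) * t).val : ℕ) / q₀ * Qform a b c x y) := by
    have hsplit := eReal_div_mul_eq_mul hst r (Qform a b c x y)
    rw [Int.cast_natCast] at hsplit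
    rw [hsplit, mul_comm]
    congr 1
    · apply eReal_div_mul_eq_of_intCast_eq
      push_cast
      rw [ZMod.natCast_zmod_val]
      exact congrArg _ (map_Qform (Int.castRingHom (ZMod q₁)) a b c x y)
    · rw [← Int.cast_natCast]
      apply eReal_div_mul_eq_of_intCast_eq
      push_cast
      rw [ZMod.natCast_zmod_val]
  unfold SFF
  simp only [hphase]
  exact norm_sum_sum_mul_phase_le _ _ _ _ _ _ φ (fun _ _ => (norm_eReal _).le) _

lemma sum_comp_le_mul_sum {α β : Type*} [DecidableEq β] {s : Finset α} {t : Finset β}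
    {g : α → β} (hg : ∀ a ∈ s, g a ∈ t) {n : ℕ} (hfiber : ∀ b ∈ t, #{a ∈ s | g a = b} ≤ n)
    {f : β → ℝ} (hf : ∀ b ∈ t, 0 ≤ f b) :
    ∑ a ∈ s, f (g a) ≤ n * ∑ b ∈ t, f b := by
  rw [← sum_fiberwise_of_maps_to hg, mul_sum]
  refine sum_le_sum fun b hb => ?_
  rw [sum_congr rfl fun a ha => by rw [(mem_filter.1 ha).2], sum_const, nsmul_eq_mul]
  exact mul_le_mul_of_nonneg_right (by exact_mod_cast hfiber b hb) (hf b hb)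

lemma card_le_of_lt_mul_of_mod_eq {m n : ℕ} {s : Finset ℕ} (hlt : ∀ r ∈ s, r < m * n)
    (hmod : ∀ r ∈ s, ∀ r' ∈ s, r % m = r' % m) : #s ≤ n := by
  simpa using card_le_card_of_injOn (t := range n) (· / m)
    (fun r hr => mem_range.2 (Nat.div_lt_of_lt_mul (hlt r hr)))
    fun r hr r' hr' h => by
      rw [← Nat.div_add_mod r m, ← Nat.div_add_mod r' m, show r / m = r' / m from h,
        hmod r hr r' hr']

lemma sum_coprime_le_mul_sum_coprime {q₀ q₁ : ℕ} [NeZero q₀] {t : ℤ}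
    (ht : (t : ZMod q₀) * q₁ = 1) {f : ℕ → ℝ} (hf : ∀ b, 0 ≤ f b) :
    ∑ r ∈ (range (q₀ * q₁)).filter (fun r => Nat.gcd r (q₀ * q₁) = 1), f ((r : ZMod q₀) * t).val ≤
      q₁ * ∑ b ∈ (range q₀).filter (fun b => Nat.gcd b q₀ = 1), f b := by
  have ht' : IsUnit (t : ZMod q₀) := IsUnit.of_mul_eq_one _ ht
  apply sum_comp_le_mul_sum
  · intro r hr
    rw [mem_filter, mem_range] at hr ⊢
    refine ⟨ZMod.val_lt _, ?_⟩
    have hr₀ : IsUnit (r : ZMod q₀) :=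
      (ZMod.isUnit_iff_coprime r q₀).2 (Nat.Coprime.coprime_mul_right_right hr.2)
    obtain ⟨w, hw⟩ := hr₀.mul ht'
    exact hw ▸ ZMod.val_coe_unit_coprime w
  · intro b _
    apply card_le_of_lt_mul_of_mod_eq
    · exact fun r hr => mem_range.1 (mem_filter.1 (mem_filter.1 hr).1).1
    · intro r hr r' hr'
      rw [← ZMod.natCast_eq_natCast_iff']
      exact ht'.mul_left_injective
        (ZMod.val_injective _ ((mem_filter.1 hr).2.trans (mem_filter.1 hr').2.symm))
  · exact fun b _ => hf b

lemma exists_sum_sum_le_card_mul {ι κ : Type*} [Fintype ι] [Fintype κ] [Nonempty ι] [Nonempty κ]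
    (G : ι → κ → ℝ) : ∃ i j, ∑ u, ∑ v, G u v ≤ (Fintype.card ι * Fintype.card κ) * G i j := by
  obtain ⟨⟨i, j⟩, hmax⟩ := Finite.exists_max fun p : ι × κ => G p.1 p.2
  refine ⟨i, j, ?_⟩
  rw [← Fintype.sum_prod_type']
  simpa using sum_le_card_nsmul univ _ _ fun p _ => hmax p

theorem stmt7 : ∃ C : ℝ, 0 < C ∧
    ∀ a b c : Matrix (Fin 4) (Fin 4) ℤ, aᵀ = a → cᵀ = c →
    ∀ q₀ q₁ : ℕ, 0 < q₀ → 0 < q₁ → Nat.Coprime q₀ q₁ →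
    ∀ X : ℝ, 2 ≤ X →
    ∀ F₁ F₂ : (Fin 4 → ℤ) → ℂ, (∀ v, ‖F₁ v‖ ≤ 1) → (∀ v, ‖F₂ v‖ ≤ 1) →
    ∃ G₁ G₂ : (Fin 4 → ℤ) → ℂ, (∀ v, ‖G₁ v‖ ≤ 1) ∧ (∀ v, ‖G₂ v‖ ≤ 1) ∧
      ∑ r ∈ (Finset.range (q₀ * q₁)).filter (fun r => Nat.gcd r (q₀ * q₁) = 1),
          ‖SFF a b c X F₁ F₂ ((r : ℝ) / (q₀ * q₁))‖ ≤
        C * (q₁ : ℝ) ^ 9 *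
          ∑ r₀ ∈ (Finset.range q₀).filter (fun r₀ => Nat.gcd r₀ q₀ = 1),
            ‖SFF a b c X G₁ G₂ ((r₀ : ℝ) / q₀)‖ := by
  refine ⟨1, one_pos, fun a b c _ _ q₀ q₁ hq₀ hq₁ hco X _ F₁ F₂ hF₁ hF₂ => ?_⟩
  have := NeZero.of_pos hq₀
  have := NeZero.of_pos hq₁
  obtain ⟨s, t, hst⟩ := Nat.isCoprime_iff_coprime.2 hco
  have ht : (t : ZMod q₀) * q₁ = 1 := by simpa using congrArg (Int.cast : ℤ → ZMod q₀) hst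
  let A := (range (q₀ * q₁)).filter (fun r => Nat.gcd r (q₀ * q₁) = 1)
  let B := (range q₀).filter (fun r₀ => Nat.gcd r₀ q₀ = 1)
  let Fu (F : (Fin 4 → ℤ) → ℂ) u := (reduceMod q₁ ⁻¹' {u}).indicator F
  let S u v (θ : ℝ) := ‖SFF a b c X (Fu F₁ u) (Fu F₂ v) θ‖
  obtain ⟨u, v, hmax⟩ := exists_sum_sum_le_card_mul fun u v => ∑ r₀ ∈ B, S u v (r₀ / q₀)
  refine ⟨Fu F₁ u, Fu F₂ v, fun x => (norm_indicator_le_norm_self _ _).trans (hF₁ x),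
    fun y => (norm_indicator_le_norm_self _ _).trans (hF₂ y), ?_⟩
  calc _ ≤ ∑ r ∈ A, ∑ u, ∑ v, S u v (((r : ZMod q₀) * t).val / q₀) :=
        sum_le_sum fun r _ => norm_SFF_le_sum_residueClasses a b c X F₁ F₂ hst r
    _ = ∑ u, ∑ v, ∑ r ∈ A, S u v (((r : ZMod q₀) * t).val / q₀) :=
        sum_comm.trans (sum_congr rfl fun _ _ => sum_comm)
    _ ≤ ∑ u, ∑ v, q₁ * ∑ r₀ ∈ B, S u v (r₀ / q₀) :=
        sum_le_sum fun u _ => sum_le_sum fun v _ =>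
          sum_coprime_le_mul_sum_coprime (f := fun r₀ : ℕ => S u v (r₀ / q₀)) ht
            fun _ => norm_nonneg _
    _ ≤ 1 * q₁ ^ 9 * ∑ r₀ ∈ B, S u v (r₀ / q₀) := by
        simp only [← mul_sum]
        grw [hmax]
        rw [Fintype.card_fun, ZMod.card, Fintype.card_fin, Nat.cast_pow]
        exact (by ring : _ = _).le
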